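/- Let C be a d × d matrix with unit diagonal and f an orthonormal basis of ℂ^d unbiased with respect to the canonical basis. Then Tr[|conj(C)⟩⟨conj(C)| ∘ Z_f] = (1/d) Σ_{i,j=1}^d |C_{ij}|². -/

import Mathlib

/-! The trace of a Hadamard product only sees the diagonals: here `|C_{st}|²` and
`(Z_f)_{(s,t),(s,t)} = ∑_k |f_k(s)|² |f_k(t)|²`, which unbiasedness makes `d · (1/d)² = 1/d`. -/

open Matrix BigOperators ComplexOrder

noncomputable section

/-- The matrix `Z_f = ∑ k |f_k ⊗ conj(f_k)⟩⟨f_k ⊗ conj(f_k)|` on `ℂ^d ⊗ ℂ^d`. -/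
def ZMat {d : ℕ} (f : Fin d → Fin d → ℂ) :
    Matrix (Fin d × Fin d) (Fin d × Fin d) ℂ :=
  Matrix.of fun p q =>
    ∑ i, (f i p.1 * star (f i p.2)) * star (f i q.1 * star (f i q.2))

/-- `f` is an orthonormal family (hence basis) of `ℂ^d`. -/
def OrthonormalBasis' {d : ℕ} (f : Fin d → Fin d → ℂ) : Prop :=
  ∀ i j, (∑ k, star (f i k) * f j k) = if i = j then 1 else 0

/-- Rank-one projector `|v⟩⟨v|` for a vector on the doubled index set. -/
def outerP {d : ℕ} (v : Fin d × Fin d → ℂ) :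
    Matrix (Fin d × Fin d) (Fin d × Fin d) ℂ :=
  Matrix.of fun p q => v p * star (v q)

/-- Vectorization of the entrywise conjugate of a matrix. -/
def vecConj {d : ℕ} (C : Matrix (Fin d) (Fin d) ℂ) : Fin d × Fin d → ℂ :=
  fun p => star (C p.1 p.2)

section

variable {d : ℕ}

theorem outerP_apply_self (v : Fin d × Fin d → ℂ) (p : Fin d × Fin d) :
    outerP v p p = ((‖v p‖ ^ 2 : ℝ) : ℂ) := by
  simpa [outerP] using Complex.mul_conj' (v p)

theorem ZMat_apply_self (f : Fin d → Fin d → ℂ) (p : Fin d × Fin d) :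
    ZMat f p p = ∑ k : Fin d, ((‖f k p.1‖ ^ 2 * ‖f k p.2‖ ^ 2 : ℝ) : ℂ) := by
  simp only [ZMat, of_apply]
  refine Finset.sum_congr rfl fun k _ => ?_
  push_cast
  rw [← Complex.mul_conj' (f k p.1), ← Complex.mul_conj' (f k p.2)]
  simp only [star_mul', Complex.star_def, Complex.conj_conj]
  ring

theorem ZMat_apply_self_of_unbiased {f : Fin d → Fin d → ℂ}
    (hunb : ∀ k s, ‖f k s‖ = 1 / Real.sqrt d) (p : Fin d × Fin d) :
    ZMat f p p = ((1 / d : ℝ) : ℂ) := by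
  have hsq : (1 / Real.sqrt d) ^ 2 = 1 / d := by
    rw [div_pow, one_pow, Real.sq_sqrt (Nat.cast_nonneg d)]
  simp only [ZMat_apply_self, hunb, hsq, Finset.sum_const, Finset.card_univ, Fintype.card_fin,
    nsmul_eq_mul]
  rcases d.eq_zero_or_pos with rfl | hd
  · simp
  · push_cast
    field_simp

theorem trace_hadamard_outerP (v : Fin d × Fin d → ℂ)
    (Z : Matrix (Fin d × Fin d) (Fin d × Fin d) ℂ) :
    (hadamard (outerP v) Z).trace = ∑ p, ((‖v p‖ ^ 2 : ℝ) : ℂ) * Z p p := by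
  simp only [trace, diag, hadamard_apply, outerP_apply_self]

end

theorem Schur_G_trace_general {d : ℕ} (C : Matrix (Fin d) (Fin d) ℂ)
    (f : Fin d → Fin d → ℂ)
    (hunb : ∀ k s, ‖f k s‖ = 1 / Real.sqrt d) :
    (Matrix.hadamard (outerP (vecConj C)) (ZMat f)).trace
      = (((∑ i, ∑ j, ‖C i j‖ ^ 2) / d : ℝ) : ℂ) := by
  rw [trace_hadamard_outerP]
  simp only [ZMat_apply_self_of_unbiased hunb, vecConj, norm_star, Fintype.sum_prod_type]
  push_cast
  simp only [one_mul, Finset.sum_mul, div_eq_mul_inv]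

theorem Schur_G_trace {d : ℕ} (hd : 0 < d) (C : Matrix (Fin d) (Fin d) ℂ)
    (hCdiag : ∀ i, C i i = 1)
    (f : Fin d → Fin d → ℂ) (hf : OrthonormalBasis' f)
    (hunb : ∀ k s, ‖f k s‖ = 1 / Real.sqrt d) :
    (Matrix.hadamard (outerP (vecConj C)) (ZMat f)).trace
      = (((∑ i, ∑ j, ‖C i j‖ ^ 2) / d : ℝ) : ℂ) :=
  Schur_G_trace_general C f hunb
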